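/- Let U be a supertropical monoid. Let S(U) be the set of tangible NC-products in U, i.e., elements x ∈ U \ eU of the form x = yz with y, z ∈ U and some y' ∈ eU satisfying y' < ey and y'z = eyz. Then the quotient Û = U / E(U, U·S(U) ∪ eU) is a supertropical semiring, where E(U, 𝔄) for an ideal 𝔄 ⊇ eU is the TE-relation identifying each element of 𝔄 with its ghost. -/

import Mathlib

universe u v w

class STM (U : Type u) extends CommMonoid U, Zero U where
  zero_mul' : ∀ x : U, 0 * x = 0
  e : U
  e_idem : e * e = e
  ghost_zero : ∀ x : U, e * x = 0 → x = 0
  le : U → U → Prop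
  le_refl : ∀ x : U, le x x
  le_trans : ∀ x y z : U, le x y → le y z → le x z
  le_total : ∀ x y : U, le x y ∨ le y x
  le_antisymm : ∀ x y : U, e * x = x → e * y = y → le x y → le y x → x = y
  le_e : ∀ x y : U, le x y ↔ le (e * x) (e * y)
  mul_le_mul : ∀ x y z : U, le x y → le (x * z) (y * z)
  zero_le : ∀ x : U, le 0 x

namespace STM

variable {U : Type u} [STM U]

/-- `x` is a ghost element, i.e. `x ∈ eU`. -/
def Ghost (x : U) : Prop := e * x = x

/-- strict inequality for the ordering of the ghost ideal -/
def slt (x y : U) : Prop := le x y ∧ ¬ le y x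

open scoped Classical in
/-- the forced addition on a supertropical monoid -/
noncomputable def add (x y : U) : U :=
  if slt (e * x) (e * y) then y
  else if slt (e * y) (e * x) then x
  else e * x

/-- the supertropical monoid `U` "is" a (supertropical) semiring: the forced
addition is associative and distributive. -/
def IsSemiring (U : Type u) [STM U] : Prop :=
  (∀ x y z : U, add (add x y) z = add x (add y z)) ∧
  (∀ x y z : U, add x y * z = add (x * z) (y * z))

end STM

open STM

/-- A transmission between supertropical monoids. -/
structure IsTransmission {U : Type u} {V : Type v} [STM U] [STM V] (α : U → V) : Prop where
  map_zero : α 0 = 0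
  map_one : α 1 = 1
  map_mul : ∀ x y : U, α (x * y) = α x * α y
  map_e : α (STM.e : U) = (STM.e : V)
  mono : ∀ x y : U, Ghost x → Ghost y → STM.le x y → STM.le (α x) (α y)


/-- The set of tangible NC-products in `U`. -/
def NCset (U : Type u) [STM U] : Set U :=
  {x : U | ¬ Ghost x ∧ ∃ y z y' : U, x = y * z ∧ Ghost y' ∧ slt y' (STM.e * y) ∧
      y' * z = STM.e * y * z}

/-- The ideal `U·S(U) ∪ eU` of `U` generated by the tangible NC-products and the ghosts. -/
def NCideal (U : Type u) [STM U] : Set U :=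
  {x : U | Ghost x ∨ ∃ u s : U, s ∈ NCset U ∧ x = u * s}

/-- The TE-relation `E(U, U·S(U) ∪ eU)` identifying each element of the ideal with its ghost. -/
def NCrel (U : Type u) [STM U] : U → U → Prop := fun x y =>
  x = y ∨ (x ∈ NCideal U ∧ y ∈ NCideal U ∧ STM.e * x = STM.e * y)

/-! The forced addition is always associative, and distributivity can only fail at
`(x + y) z` with `ex < ey`, `exz = eyz` and `yz` tangible. In `U` such a `yz` is a tangible
NC-product, so it is identified with its ghost in `Û`; since a transmission reflects the strict
order of ghosts and `σ a = σ b` forces `ea = eb`, every such configuration in `Û` lifts to one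
in `U`. -/

namespace STM

variable {U : Type u} [STM U]

theorem ghost_e_mul (x : U) : Ghost (e * x) := by
  rw [Ghost, ← mul_assoc, e_idem]

theorem slt_asymm {a b : U} (h : slt a b) : ¬ slt b a := fun h' => h.2 h'.1

theorem slt_irrefl (a : U) : ¬ slt a a := fun h => h.2 h.1

theorem slt_trans {a b c : U} (hab : slt a b) (hbc : slt b c) : slt a c :=
  ⟨le_trans _ _ _ hab.1 hbc.1, fun hca => hab.2 (le_trans _ _ _ hbc.1 hca)⟩

theorem slt_of_not_le {a b : U} (h : ¬ le b a) : slt a b :=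
  ⟨(le_total a b).resolve_right h, h⟩

theorem slt_trichotomy {a b : U} (ha : Ghost a) (hb : Ghost b) :
    slt a b ∨ a = b ∨ slt b a := by
  by_cases hba : le b a
  · by_cases hab : le a b
    · exact Or.inr (Or.inl (le_antisymm a b ha hb hab hba))
    · exact Or.inr (Or.inr (slt_of_not_le hab))
  · exact Or.inl (slt_of_not_le hba)

theorem add_of_slt {x y : U} (h : slt (e * x) (e * y)) : add x y = y := by
  rw [add, if_pos h]

theorem add_of_slt' {x y : U} (h : slt (e * y) (e * x)) : add x y = x := by
  rw [add, if_neg (slt_asymm h), if_pos h]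

theorem add_of_e_mul_eq {x y : U} (h : e * x = e * y) : add x y = e * x := by
  rw [add, h, if_neg (slt_irrefl _), if_neg (slt_irrefl _)]

theorem add_comm (x y : U) : add x y = add y x := by
  rcases slt_trichotomy (ghost_e_mul x) (ghost_e_mul y) with h | h | h
  · rw [add_of_slt h, add_of_slt' h]
  · rw [add_of_e_mul_eq h, add_of_e_mul_eq h.symm, h]
  · rw [add_of_slt' h, add_of_slt h]

theorem add_assoc (x y z : U) : add (add x y) z = add x (add y z) := by
  have ee : ∀ w : U, e * (e * w) = e * w := ghost_e_mul
  rcases slt_trichotomy (ghost_e_mul x) (ghost_e_mul y) with hxy | hxy | hxy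
  · rw [add_of_slt hxy]
    rcases slt_trichotomy (ghost_e_mul y) (ghost_e_mul z) with hyz | hyz | hyz
    · rw [add_of_slt hyz, add_of_slt (slt_trans hxy hyz)]
    · rw [add_of_e_mul_eq hyz, add_of_slt (y := e * y) (by rwa [ee])]
    · rw [add_of_slt' hyz, add_of_slt hxy]
  · rw [add_of_e_mul_eq hxy]
    rcases slt_trichotomy (ghost_e_mul y) (ghost_e_mul z) with hyz | hyz | hyz
    · rw [add_of_slt hyz, add_of_slt (x := e * x) (by rwa [ee, hxy]),
        add_of_slt (x := x) (by rwa [hxy])]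
    · rw [add_of_e_mul_eq hyz, add_of_e_mul_eq (x := e * x) (by rw [ee, hxy, hyz]),
        add_of_e_mul_eq (y := e * y) (by rw [ee, hxy]), ee]
    · rw [add_of_slt' hyz, add_of_slt' (x := e * x) (by rwa [ee, hxy]), add_of_e_mul_eq hxy]
  · rw [add_of_slt' hxy]
    rcases slt_trichotomy (ghost_e_mul x) (ghost_e_mul z) with hxz | hxz | hxz
    · rw [add_of_slt hxz, add_of_slt (slt_trans hxy hxz), add_of_slt hxz]
    · rw [add_of_e_mul_eq hxz, add_of_slt (x := y) (y := z) (by rwa [← hxz]),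
        add_of_e_mul_eq hxz]
    · rw [add_of_slt' hxz]
      rcases slt_trichotomy (ghost_e_mul y) (ghost_e_mul z) with hyz | hyz | hyz
      · rw [add_of_slt hyz, add_of_slt' hxz]
      · rw [add_of_e_mul_eq hyz, add_of_slt' (y := e * y) (by rwa [ee])]
      · rw [add_of_slt' hyz, add_of_slt' hxy]

theorem add_mul_of_slt {x y z : U} (hxy : slt (e * x) (e * y))
    (hghost : e * x * z = e * y * z → Ghost (y * z)) :
    add x y * z = add (x * z) (y * z) := by
  rw [add_of_slt hxy]
  rcases slt_trichotomy (ghost_e_mul (x * z)) (ghost_e_mul (y * z)) with h | h | h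
  · rw [add_of_slt h]
  · rw [add_of_e_mul_eq h, h, hghost (by rwa [← mul_assoc, ← mul_assoc] at h)]
  · refine absurd ?_ h.2
    rw [← mul_assoc, ← mul_assoc]
    exact mul_le_mul _ _ _ hxy.1

theorem isSemiring_of_ghost_mul
    (h : ∀ x y z : U, slt (e * x) (e * y) → e * x * z = e * y * z → Ghost (y * z)) :
    IsSemiring U := by
  refine ⟨add_assoc, fun x y z => ?_⟩
  rcases slt_trichotomy (ghost_e_mul x) (ghost_e_mul y) with hxy | hxy | hxy
  · exact add_mul_of_slt hxy (h x y z hxy)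
  · rw [add_of_e_mul_eq hxy, add_of_e_mul_eq (by rw [← mul_assoc, hxy, mul_assoc]), mul_assoc]
  · rw [add_comm, add_mul_of_slt hxy (h y x z hxy), add_comm]

end STM

namespace IsTransmission

variable {U : Type u} {V : Type v} [STM U] [STM V] {σ : U → V}

theorem map_e_mul (hσ : IsTransmission σ) (x : U) : σ (e * x) = e * σ x := by
  rw [hσ.map_mul, hσ.map_e]

theorem slt_of_slt_map (hσ : IsTransmission σ) {x y : U}
    (h : slt (e * σ x) (e * σ y)) : slt (e * x) (e * y) := by
  refine slt_of_not_le fun hyx => h.2 ?_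
  simpa only [hσ.map_e_mul] using hσ.mono _ _ (ghost_e_mul y) (ghost_e_mul x) hyx

end IsTransmission

section NCrel

variable {U : Type u} [STM U]

theorem NCrel.e_mul_eq {x y : U} (h : NCrel U x y) : e * x = e * y :=
  h.elim (congrArg _) fun h => h.2.2

theorem NCrel.e_mul_self {x : U} (hx : x ∈ NCideal U) : NCrel U (e * x) x :=
  Or.inr ⟨Or.inl (ghost_e_mul x), hx, ghost_e_mul x⟩

theorem mul_mem_NCideal_of_slt {x y z : U} (hxy : slt (e * x) (e * y))
    (hxz : e * x * z = e * y * z) : y * z ∈ NCideal U := by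
  by_cases hg : Ghost (y * z)
  · exact Or.inl hg
  · exact Or.inr ⟨1, y * z, ⟨hg, y, z, e * x, rfl, ghost_e_mul x, hxy, hxz⟩, (one_mul _).symm⟩

end NCrel

/-- `Û` is modelled by any realization of the quotient: a surjective transmission `σ : U → V`
whose equivalence kernel is `E(U, U·S(U) ∪ eU)`. -/
theorem associated_semiring_is_semiring {U : Type u} {V : Type v} [STM U] [STM V]
    (σ : U → V) (hσ : IsTransmission σ) (hsurj : Function.Surjective σ)
    (hker : ∀ x y : U, σ x = σ y ↔ NCrel U x y) :
    IsSemiring V := by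
  refine isSemiring_of_ghost_mul fun x' y' z' hlt hcollapse => ?_
  obtain ⟨x, rfl⟩ := hsurj x'
  obtain ⟨y, rfl⟩ := hsurj y'
  obtain ⟨z, rfl⟩ := hsurj z'
  have hxy : slt (e * x) (e * y) := hσ.slt_of_slt_map hlt
  have hxz : e * x * z = e * y * z := by
    have hrel : NCrel U (e * x * z) (e * y * z) := by
      rw [← hker]
      simpa only [hσ.map_mul, hσ.map_e] using hcollapse
    simpa only [mul_assoc, ← mul_assoc e e, e_idem] using hrel.e_mul_eq
  have hyz : σ (e * (y * z)) = σ (y * z) :=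
    (hker _ _).2 (NCrel.e_mul_self (mul_mem_NCideal_of_slt hxy hxz))
  rwa [hσ.map_e_mul, hσ.map_mul] at hyz
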